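/- Let α ≥ -1/2, d_α = 2α+2, and let μ_α be the measure on ℝ with density A_α|x|^{2α+1} with respect to Lebesgue measure, where A_α = (2^{α+1}Γ(α+1))^{-1}. Let 0 < β < d_α, γ > 0, and let K(x) = |x|^{β-d_α}/(1+|x|)^γ. If d_α/(d_α+γ-β) < t < d_α/(d_α-β), then ∫_ℝ |K(x)|^t dμ_α(x) < ∞. -/
import Mathlib

open Real MeasureTheory Set

theorem stmt_1 (α : ℝ) (hα : α ≥ -(1/2)) (β γ t : ℝ)
    (dα : ℝ) (hd : dα = 2 * α + 2)
    (Aα : ℝ) (hA : Aα = ((2:ℝ) ^ (α + 1) * Real.Gamma (α + 1))⁻¹)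
    (μ : Measure ℝ)
    (hμ : μ = volume.withDensity (fun x => ENNReal.ofReal (Aα * |x| ^ (2 * α + 1))))
    (hβ : 0 < β) (hβd : β < dα) (hγ : 0 < γ)
    (ht1 : dα / (dα + γ - β) < t) (ht2 : t < dα / (dα - β)) :
    ∫⁻ x, ENNReal.ofReal (|(|x| ^ (β - dα) / (1 + |x|) ^ γ)| ^ t) ∂μ < ⊤ := by
  -- basic facts
  have hdα : 0 < dα := by rw [hd]; linarith
  have hden2 : 0 < dα + γ - β := by linarith
  have hden1 : 0 < dα - β := by linarith
  have ht0 : 0 < t := lt_trans (div_pos hdα hden2) ht1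
  have hAα : 0 < Aα := by
    rw [hA]
    have h1 : 0 < Real.Gamma (α + 1) := Real.Gamma_pos_of_pos (by linarith)
    positivity
  have key1 : t * (dα - β) < dα := by
    rw [lt_div_iff₀ hden1] at ht2; linarith [ht2]
  have key2 : dα < t * (dα + γ - β) := by
    rw [div_lt_iff₀ hden2] at ht1; linarith [ht1]
  set F : ℝ → ℝ := fun x => Aα * |x| ^ (2 * α + 1) * |(|x| ^ (β - dα) / (1 + |x|) ^ γ)| ^ t with hF
  have hFnn : ∀ x, 0 ≤ F x := fun x => by
    have := abs_nonneg x; positivity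
  have hFmeas : Measurable F := by fun_prop
  -- the integrability on Ioi 0
  set e0 : ℝ := 2 * α + 1 + (β - dα) * t with he0def
  have hbd : (β - dα) * t = -(t * (dα - β)) := by ring
  have he0 : -1 < e0 := by rw [he0def]; rw [hd] at key1 ⊢; linarith [hbd]
  have he1 : e0 - γ * t < -1 := by rw [he0def]; rw [hd] at key2 ⊢; nlinarith [key2]
  have hIoi : IntegrableOn F (Ioi 0) := by
    rw [← Ioo_union_Ici_eq_Ioi (zero_lt_one (α := ℝ)), integrableOn_union]
    constructor
    · apply Integrable.mono' (((intervalIntegral.integrableOn_Ioo_rpow_iff one_pos).mpr he0).const_mul Aα)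
        hFmeas.aestronglyMeasurable.restrict
      rw [ae_restrict_iff' measurableSet_Ioo]
      refine ae_of_all _ fun x hx => ?_
      have hx0 : 0 < x := hx.1
      rw [Real.norm_eq_abs, abs_of_nonneg (hFnn x)]
      simp only [hF]
      rw [abs_of_pos hx0, abs_of_nonneg (show (0:ℝ) ≤ x ^ (β - dα) / (1 + x) ^ γ by positivity)]
      have h2 : (x ^ (β - dα) / (1 + x) ^ γ) ^ t ≤ x ^ ((β - dα) * t) := by
        rw [Real.rpow_mul hx0.le]
        refine Real.rpow_le_rpow (by positivity) ?_ ht0.le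
        exact div_le_self (by positivity) (Real.one_le_rpow (by linarith) hγ.le)
      calc Aα * x ^ (2*α+1) * (x ^ (β - dα) / (1 + x) ^ γ) ^ t
          ≤ Aα * x ^ (2*α+1) * x ^ ((β-dα)*t) :=
            mul_le_mul_of_nonneg_left h2 (by positivity)
        _ = Aα * x ^ e0 := by rw [mul_assoc, ← Real.rpow_add hx0, he0def]
    · rw [integrableOn_Ici_iff_integrableOn_Ioi]
      apply Integrable.mono' (((integrableOn_Ioi_rpow_iff one_pos).mpr he1).const_mul Aα)
        hFmeas.aestronglyMeasurable.restrict
      rw [ae_restrict_iff' measurableSet_Ioi]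
      refine ae_of_all _ fun x hx => ?_
      have hx0 : (0:ℝ) < x := lt_trans one_pos hx
      rw [Real.norm_eq_abs, abs_of_nonneg (hFnn x)]
      simp only [hF]
      rw [abs_of_pos hx0, abs_of_nonneg (show (0:ℝ) ≤ x ^ (β - dα) / (1 + x) ^ γ by positivity)]
      have h3 : (x ^ (β - dα) / (1 + x) ^ γ) ^ t ≤ x ^ ((β - dα - γ) * t) := by
        rw [Real.rpow_mul hx0.le]
        refine Real.rpow_le_rpow (by positivity) ?_ ht0.le
        rw [show x ^ (β - dα - γ) = x ^ (β - dα) / x ^ γ from by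
          rw [← Real.rpow_sub hx0]]
        exact div_le_div_of_nonneg_left (Real.rpow_nonneg hx0.le _)
          (Real.rpow_pos_of_pos hx0 γ) (Real.rpow_le_rpow hx0.le (by linarith) hγ.le)
      calc Aα * x ^ (2*α+1) * (x ^ (β - dα) / (1 + x) ^ γ) ^ t
          ≤ Aα * x ^ (2*α+1) * x ^ ((β-dα-γ)*t) :=
            mul_le_mul_of_nonneg_left h3 (by positivity)
        _ = Aα * x ^ (e0 - γ * t) := by
            rw [mul_assoc, ← Real.rpow_add hx0, he0def]
            congr 2
            ring
  have hInt : Integrable F := by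
    rw [← integrableOn_univ, ← @Iio_union_Ici _ _ (0 : ℝ), integrableOn_union,
      integrableOn_Ici_iff_integrableOn_Ioi]
    refine ⟨?_, hIoi⟩
    rw [← (Measure.measurePreserving_neg (volume : Measure ℝ)).integrableOn_comp_preimage
        (Homeomorph.neg ℝ).measurableEmbedding]
    simp only [Function.comp_def, neg_preimage, neg_Iio, neg_neg, neg_zero, hF, abs_neg]
    exact hIoi
  -- reduce lintegral
  rw [hμ, lintegral_withDensity_eq_lintegral_mul _ (by fun_prop) (by fun_prop)]
  have heq : ((fun x : ℝ => ENNReal.ofReal (Aα * |x| ^ (2 * α + 1))) *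
      fun x : ℝ => ENNReal.ofReal (|(|x| ^ (β - dα) / (1 + |x|) ^ γ)| ^ t))
      = fun x => ENNReal.ofReal (F x) := by
    funext x
    simp only [Pi.mul_apply, hF]
    rw [← ENNReal.ofReal_mul (by positivity)]
  rw [heq]
  exact (hasFiniteIntegral_iff_ofReal (ae_of_all _ hFnn)).mp hInt.hasFiniteIntegral
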